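/- arXiv:2402.15190 — 5 statements merged into one kernel-verified Lean document; each statement's English description precedes it below -/
import Mathlib

section
/- Let w be a positive weight on ℝ with all moments finite, (P_n) its monic orthogonal polynomials with recurrence coefficients α_n, β_n and norms h_n. Then for n ≥ 1, (1/h_{n-1}) ∫ x³ P_n(x) P_{n-1}(x) w(x) dx = β_n (α_{n-1}² + α_{n-1} α_n + α_n² + β_{n-1} + β_n + β_{n+1}). -/
open MeasureTheory Polynomial

/-! Expanding `x³ P_n` by the recurrence gives a combination of `P_{n+3}, …, P_{n-3}`, and
orthogonality keeps only the `P_{n-1}` component: the entry `(J³)_{n,n-1}` of the Jacobi matrix,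
a sum over the three-step lattice paths from `n` to `n - 1`. Besides `h_{n-1} > 0`, only the
linearity of `p ↦ ∫ p w` and orthogonality enter. -/

/-- `P (0 - 1) = P 0` is a junk value; it always comes with the factor `β 0 = 0`. -/
structure IsOrthogonalRecurrence {R : Type*} [CommRing R] (L : R[X] →ₗ[R] R) (P : ℕ → R[X])
    (α β : ℕ → R) : Prop where
  beta_zero : β 0 = 0
  X_mul : ∀ j, X * P j = P (j + 1) + C (α j) * P j + C (β j) * P (j - 1)
  orthogonal : ∀ j k, j ≠ k → L (P j * P k) = 0

namespace IsOrthogonalRecurrence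

variable {R : Type*} [CommRing R] {L : R[X] →ₗ[R] R} {P : ℕ → R[X]} {α β : ℕ → R}

theorem map_X_pow_succ_mul_mul (hS : IsOrthogonalRecurrence L P α β) (k j b : ℕ) :
    L (X ^ (k + 1) * P j * P b) = L (X ^ k * P (j + 1) * P b) + α j * L (X ^ k * P j * P b)
      + β j * L (X ^ k * P (j - 1) * P b) := by
  have hexpand : (X : R[X]) ^ (k + 1) * P j * P b = X ^ k * P (j + 1) * P b
      + α j • (X ^ k * P j * P b) + β j • (X ^ k * P (j - 1) * P b) := by
    rw [pow_succ, mul_assoc (X ^ k), hS.X_mul j, smul_eq_C_mul, smul_eq_C_mul]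
    ring
  rw [hexpand, map_add, map_add, map_smul, map_smul, smul_eq_mul, smul_eq_mul]

theorem map_X_mul_mul_eq_zero (hS : IsOrthogonalRecurrence L P α β) {a b : ℕ} (hab : b + 2 ≤ a) :
    L (X * P a * P b) = 0 := by
  simpa [hS.orthogonal (a + 1) b (by omega), hS.orthogonal a b (by omega),
    hS.orthogonal (a - 1) b (by omega)] using hS.map_X_pow_succ_mul_mul 0 a b

theorem map_X_mul_mul_self (hS : IsOrthogonalRecurrence L P α β) (j : ℕ) :
    L (X * P j * P j) = α j * L (P j * P j) := by
  have h := hS.map_X_pow_succ_mul_mul 0 j j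
  simp only [zero_add, pow_one, pow_zero, one_mul, hS.orthogonal (j + 1) j (by omega)] at h
  rcases j with _ | i
  · simpa [hS.beta_zero] using h
  · simpa [hS.orthogonal i (i + 1) (by omega)] using h

theorem map_X_mul_mul_succ (hS : IsOrthogonalRecurrence L P α β) (j : ℕ) :
    L (X * P j * P (j + 1)) = L (P (j + 1) * P (j + 1)) := by
  simpa [hS.orthogonal j (j + 1) (by omega), hS.orthogonal (j - 1) (j + 1) (by omega)]
    using hS.map_X_pow_succ_mul_mul 0 j (j + 1)

theorem map_X_mul_succ_mul (hS : IsOrthogonalRecurrence L P α β) (j : ℕ) :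
    L (X * P (j + 1) * P j) = β (j + 1) * L (P j * P j) := by
  simpa [hS.orthogonal (j + 2) j (by omega), hS.orthogonal (j + 1) j (by omega)]
    using hS.map_X_pow_succ_mul_mul 0 (j + 1) j

theorem map_X_sq_mul_add_two_mul (hS : IsOrthogonalRecurrence L P α β) (j : ℕ) :
    L (X ^ 2 * P (j + 2) * P j) = β (j + 2) * β (j + 1) * L (P j * P j) := by
  rw [hS.map_X_pow_succ_mul_mul 1 (j + 2) j, pow_one, hS.map_X_mul_mul_eq_zero (by omega), hS.map_X_mul_mul_eq_zero le_rfl,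
    show j + 2 - 1 = j + 1 by omega, hS.map_X_mul_succ_mul]
  ring

theorem map_X_sq_mul_succ_mul (hS : IsOrthogonalRecurrence L P α β) (j : ℕ) :
    L (X ^ 2 * P (j + 1) * P j) = β (j + 1) * L (P j * P j) * (α j + α (j + 1)) := by
  rw [hS.map_X_pow_succ_mul_mul 1 (j + 1) j]
  simp only [pow_one, hS.map_X_mul_mul_eq_zero (le_refl (j + 2)), Nat.add_sub_cancel,
    hS.map_X_mul_succ_mul, hS.map_X_mul_mul_self]
  ring

theorem map_X_sq_mul_mul_self (hS : IsOrthogonalRecurrence L P α β) (j : ℕ) :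
    L (X ^ 2 * P j * P j) = L (P j * P j) * (α j ^ 2 + β j + β (j + 1)) := by
  have hpred : β j * L (X * P (j - 1) * P j) = β j * L (P j * P j) := by
    rcases j with _ | i
    · simp [hS.beta_zero]
    · rw [Nat.add_sub_cancel, hS.map_X_mul_mul_succ]
  rw [hS.map_X_pow_succ_mul_mul 1 j j]
  simp only [pow_one, hpred, hS.map_X_mul_succ_mul, hS.map_X_mul_mul_self]
  ring

theorem map_X_pow_three_mul_succ_mul (hS : IsOrthogonalRecurrence L P α β) (m : ℕ) :
    L (X ^ 3 * P (m + 1) * P m) = β (m + 1) * L (P m * P m)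
      * (α m ^ 2 + α m * α (m + 1) + α (m + 1) ^ 2 + β m + β (m + 1) + β (m + 2)) := by
  rw [hS.map_X_pow_succ_mul_mul 2 (m + 1) m, Nat.add_sub_cancel, hS.map_X_sq_mul_add_two_mul,
    hS.map_X_sq_mul_succ_mul, hS.map_X_sq_mul_mul_self]
  ring

end IsOrthogonalRecurrence

theorem integrable_eval_mul_of_moments {w : ℝ → ℝ}
    (hmom : ∀ k : ℕ, Integrable (fun x : ℝ => |x| ^ k * w x)) (p : ℝ[X]) :
    Integrable (fun x : ℝ => p.eval x * w x) := by
  have hw : AEStronglyMeasurable w := by simpa using (hmom 0).aestronglyMeasurable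
  have hpow (i : ℕ) : Integrable (fun x : ℝ => x ^ i * w x) :=
    (hmom i).mono ((continuous_pow i).aestronglyMeasurable.mul hw)
      (.of_forall fun x => by simp)
  simp_rw [eval_eq_sum_range, Finset.sum_mul, mul_assoc]
  exact integrable_finsetSum _ fun i _ => (hpow i).const_mul _

noncomputable def weightedIntegral (w : ℝ → ℝ)
    (hmom : ∀ k : ℕ, Integrable (fun x : ℝ => |x| ^ k * w x)) : ℝ[X] →ₗ[ℝ] ℝ where
  toFun p := ∫ x, p.eval x * w x
  map_add' p q := by
    simp only [eval_add, add_mul]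
    exact integral_add (integrable_eval_mul_of_moments hmom p)
      (integrable_eval_mul_of_moments hmom q)
  map_smul' c p := by
    simp only [eval_smul, smul_eq_mul, mul_assoc, RingHom.id_apply]
    exact integral_const_mul c _

theorem weightedIntegral_apply (w : ℝ → ℝ)
    (hmom : ∀ k : ℕ, Integrable (fun x : ℝ => |x| ^ k * w x)) (p : ℝ[X]) :
    weightedIntegral w hmom p = ∫ x, p.eval x * w x := rfl

/-- A nonzero polynomial is nonzero on a nonempty open set, which has positive Lebesgue measure. -/
theorem integral_eval_sq_mul_pos {w : ℝ → ℝ} (hw : ∀ x, 0 < w x) {p : ℝ[X]} (hp : p ≠ 0)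
    (hint : Integrable (fun x : ℝ => p.eval x ^ 2 * w x)) :
    0 < ∫ x, p.eval x ^ 2 * w x := by
  rw [integral_pos_iff_support_of_nonneg (fun x => mul_nonneg (sq_nonneg _) (hw x).le) hint]
  have hne : {x : ℝ | p.eval x ≠ 0}.Nonempty := by
    by_contra hzero
    refine hp (Polynomial.funext fun x => ?_)
    by_contra hx
    exact hzero ⟨x, by simpa using hx⟩
  have hopen : IsOpen {x : ℝ | p.eval x ≠ 0} := isOpen_ne_fun p.continuous continuous_const
  refine (hopen.measure_pos volume hne).trans_le (measure_mono fun x hx => ?_)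
  exact mul_ne_zero (pow_ne_zero 2 hx) (hw x).ne'

theorem x_cube_offdiagonal_moment_identity_general
    (w : ℝ → ℝ) (P : ℕ → Polynomial ℝ) (α β h : ℕ → ℝ)
    (hw_pos : ∀ x, 0 < w x)
    (hmom : ∀ k : ℕ, Integrable (fun x : ℝ => |x| ^ k * w x))
    (hmonic : ∀ j, (P j).Monic)
    (horth : ∀ j k, j ≠ k → ∫ x : ℝ, (P j).eval x * (P k).eval x * w x = 0)
    (hh : ∀ j, h j = ∫ x : ℝ, ((P j).eval x) ^ 2 * w x)
    (hβ0 : β 0 = 0)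
    (hrec0 : Polynomial.X * P 0 = P 1 + Polynomial.C (α 0) * P 0)
    (hrec : ∀ n, 1 ≤ n →
      Polynomial.X * P n = P (n + 1) + Polynomial.C (α n) * P n
        + Polynomial.C (β n) * P (n - 1)) :
    ∀ n, 1 ≤ n →
      (1 / h (n - 1)) * ∫ x : ℝ, x ^ 3 * (P n).eval x * (P (n - 1)).eval x * w x
        = β n * ((α (n - 1)) ^ 2 + α (n - 1) * α n + (α n) ^ 2
            + β (n - 1) + β n + β (n + 1)) := by
  intro n hn
  obtain ⟨m, rfl⟩ := Nat.exists_eq_add_of_le' hn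
  set L := weightedIntegral w hmom
  have hS : IsOrthogonalRecurrence L P α β := by
    refine ⟨hβ0, fun j => ?_, fun j k hjk => ?_⟩
    · rcases j with _ | i
      · simp [hrec0, hβ0]
      · exact hrec (i + 1) (Nat.le_add_left 1 i)
    · simpa [L, weightedIntegral_apply, mul_assoc] using horth j k hjk
  have hnorm : h m = L (P m * P m) := by simp [L, weightedIntegral_apply, hh, sq]
  have hpos : 0 < h m := hh m ▸ integral_eval_sq_mul_pos hw_pos (hmonic m).ne_zero
    (by simpa [sq] using integrable_eval_mul_of_moments hmom (P m * P m))
  have hcube : ∫ x, x ^ 3 * (P (m + 1)).eval x * (P m).eval x * w x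
      = L (X ^ 3 * P (m + 1) * P m) := by simp [L, weightedIntegral_apply]
  rw [Nat.add_sub_cancel, hcube, hS.map_X_pow_three_mul_succ_mul, ← hnorm]
  field_simp

/-- Moment identity: for `n ≥ 1`,
`(1/h_{n-1}) ∫ x³ P_n P_{n-1} w = β_n (α_{n-1}² + α_{n-1} α_n + α_n²
+ β_{n-1} + β_n + β_{n+1})` (with the convention `β_0 = 0`). -/
theorem x_cube_offdiagonal_moment_identity
    (w : ℝ → ℝ) (P : ℕ → Polynomial ℝ) (α β h : ℕ → ℝ)
    (hw_pos : ∀ x, 0 < w x)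
    (hmom : ∀ k : ℕ, Integrable (fun x : ℝ => |x| ^ k * w x))
    (hmonic : ∀ j, (P j).Monic)
    (hdeg : ∀ j, (P j).natDegree = j)
    (horth : ∀ j k, j ≠ k → ∫ x : ℝ, (P j).eval x * (P k).eval x * w x = 0)
    (hh : ∀ j, h j = ∫ x : ℝ, ((P j).eval x) ^ 2 * w x)
    (hβ0 : β 0 = 0)
    (hrec0 : Polynomial.X * P 0 = P 1 + Polynomial.C (α 0) * P 0)
    (hrec : ∀ n, 1 ≤ n →
      Polynomial.X * P n = P (n + 1) + Polynomial.C (α n) * P n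
        + Polynomial.C (β n) * P (n - 1)) :
    ∀ n, 1 ≤ n →
      (1 / h (n - 1)) * ∫ x : ℝ, x ^ 3 * (P n).eval x * (P (n - 1)).eval x * w x
        = β n * ((α (n - 1)) ^ 2 + α (n - 1) * α n + (α n) ^ 2
            + β (n - 1) + β n + β (n + 1)) :=
  x_cube_offdiagonal_moment_identity_general w P α β h hw_pos hmom hmonic horth hh hβ0 hrec0 hrec
end

section
/- For real numbers t < b, the integral (1/(2π)) ∫_t^b (x · 2x)/√((b−x)(x−t)) dx equals (3b² + 2bt + 3t²)/8. -/
/-!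
The substitution `x = m + r sin θ`, with `m` the midpoint and `r` the half-length of `(t, b)`,
turns `√((b - x)(x - t))` into `r cos θ`, which cancels against `dx = r cos θ dθ`. The integral
becomes `∫_{-π/2}^{π/2} 2 (m + r sin θ)² dθ = 2π (m² + r²/2)`, and `m² + r²/2 = (3b² + 2bt + 3t²)/8`.
-/

open Real Set

theorem image_add_mul_sin_Ioo (m : ℝ) {r : ℝ} (hr : 0 < r) :
    (fun θ => m + r * sin θ) '' Ioo (-(π / 2)) (π / 2) = Ioo (m - r) (m + r) := by
  have hsin : sin '' Ioo (-(π / 2)) (π / 2) = Ioo (-1) 1 := by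
    simpa using sinPartialHomeomorph.image_source_eq_target
  rw [show (fun θ => m + r * sin θ) = (r * · + m) ∘ sin by ext; simp [add_comm],
    image_comp, hsin, image_affine_Ioo hr]
  congr 1 <;> ring

theorem strictMonoOn_add_mul_sin (m : ℝ) {r : ℝ} (hr : 0 < r) :
    StrictMonoOn (fun θ => m + r * sin θ) (Ioo (-(π / 2)) (π / 2)) := fun _ hx _ hy hxy => by
  have := strictMonoOn_sin (Ioo_subset_Icc_self hx) (Ioo_subset_Icc_self hy) hxy
  dsimp only
  gcongr

theorem integral_div_sqrt_eq_integral_sin (f : ℝ → ℝ) (m : ℝ) {r : ℝ} (hr : 0 < r) :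
    ∫ x in (m - r)..(m + r), f x / √((m + r - x) * (x - (m - r)))
      = ∫ θ in (-(π / 2))..(π / 2), f (m + r * sin θ) := by
  have hderiv : ∀ θ ∈ Ioo (-(π / 2)) (π / 2),
      HasDerivWithinAt (fun θ => m + r * sin θ) (r * cos θ) (Ioo (-(π / 2)) (π / 2)) θ :=
    fun θ _ => (((hasDerivAt_sin θ).const_mul r).const_add m).hasDerivWithinAt
  have hsubst := MeasureTheory.integral_image_eq_integral_abs_deriv_smul measurableSet_Ioo hderiv
    (strictMonoOn_add_mul_sin m hr).injOn (fun x => f x / √((m + r - x) * (x - (m - r))))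
  rw [image_add_mul_sin_Ioo m hr] at hsubst
  rw [intervalIntegral.integral_of_le (by linarith), MeasureTheory.integral_Ioc_eq_integral_Ioo,
    hsubst, intervalIntegral.integral_of_le (by linarith [pi_pos]),
    MeasureTheory.integral_Ioc_eq_integral_Ioo]
  refine MeasureTheory.setIntegral_congr_fun measurableSet_Ioo fun θ hθ => ?_
  have hcos : 0 < r * cos θ := mul_pos hr (cos_pos_of_mem_Ioo hθ)
  have hsq : (m + r - (m + r * sin θ)) * (m + r * sin θ - (m - r)) = (r * cos θ) ^ 2 := by
    linear_combination (-r ^ 2) * sin_sq_add_cos_sq θ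
  rw [smul_eq_mul, hsq, sqrt_sq hcos.le, abs_of_pos hcos, mul_div_cancel₀ _ hcos.ne']

theorem integral_add_mul_sin_sq (m r : ℝ) :
    ∫ θ in (-(π / 2))..(π / 2), (m + r * sin θ) ^ 2 = π * (m ^ 2 + r ^ 2 / 2) := by
  have hexpand : ∀ θ, (m + r * sin θ) ^ 2 = m ^ 2 + 2 * m * r * sin θ + r ^ 2 * sin θ ^ 2 :=
    fun θ => by ring
  simp_rw [hexpand]
  rw [intervalIntegral.integral_add, intervalIntegral.integral_add,
    intervalIntegral.integral_const, intervalIntegral.integral_const_mul,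
    intervalIntegral.integral_const_mul, integral_sin, integral_sin_sq]
  · simp only [sub_neg_eq_add, add_halves, smul_eq_mul, cos_neg, cos_pi_div_two, sub_self,
      mul_zero, add_zero, sin_neg, sin_pi_div_two, zero_add]
    ring
  all_goals exact Continuous.intervalIntegrable (by fun_prop) _ _

/-- Coulomb fluid integral for the Gaussian weight (`v₀'(x) = 2x`):
`(1/(2π)) ∫_t^b x·2x/√((b-x)(x-t)) dx = (3b² + 2bt + 3t²)/8`. -/
theorem coulomb_integral_gaussian (t b : ℝ) (htb : t < b) :
    (1 / (2 * π)) * ∫ x in t..b, (x * (2 * x)) / Real.sqrt ((b - x) * (x - t))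
      = (3 * b ^ 2 + 2 * b * t + 3 * t ^ 2) / 8 := by
  obtain ⟨m, r, hr, rfl, rfl⟩ : ∃ m r, 0 < r ∧ t = m - r ∧ b = m + r :=
    ⟨(t + b) / 2, (b - t) / 2, by linarith, by ring, by ring⟩
  calc (1 / (2 * π)) * ∫ x in (m - r)..(m + r), (x * (2 * x)) / √((m + r - x) * (x - (m - r)))
      = (1 / (2 * π)) * ∫ θ in (-(π / 2))..(π / 2), 2 * (m + r * sin θ) ^ 2 := by
        rw [integral_div_sqrt_eq_integral_sin _ m hr]
        ring_nf
    _ = (3 * (m + r) ^ 2 + 2 * (m + r) * (m - r) + 3 * (m - r) ^ 2) / 8 := by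
        rw [intervalIntegral.integral_const_mul, integral_add_mul_sin_sq]
        field_simp
        ring
end

section
/- For real numbers t < b, the integral (1/(2π)) ∫_t^b (x · 6x⁵)/√((b−x)(x−t)) dx equals 3(231b⁶ + 126b⁵t + 105b⁴t² + 100b³t³ + 105b²t⁴ + 126bt⁵ + 231t⁶)/1024. -/
/-!
Substituting `x = (b - t)/2 · cos φ + (b + t)/2` turns the Chebyshev weight
`dx / √((b - x)(x - t))` on `(t, b)` into `dφ` on `(0, π)`. By the binomial theorem the sextic
moment then reduces to the Wallis integrals `∫₀^π cos^k`, which vanish for odd `k` and obey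
`I (k + 2) = (k + 1)/(k + 2) · I k`.
-/

open Real MeasureTheory Set intervalIntegral

-- The one-dimensional change of variables formula needs no integrability hypothesis,
-- so neither does this lemma.
theorem integral_div_sqrt_eq_integral_comp_cos {t b : ℝ} (htb : t < b) (f : ℝ → ℝ) :
    ∫ x in t..b, f x / √((b - x) * (x - t))
      = ∫ φ in 0..π, f ((b - t) / 2 * cos φ + (b + t) / 2) := by
  set r := (b - t) / 2
  set c := (b + t) / 2
  have hr : 0 < r := by simp only [r]; linarith
  have himage : (fun φ => r * cos φ + c) '' Icc 0 π = Icc t b := by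
    rw [← image_image (r * · + c), bijOn_cos.image_eq, image_affine_Icc' hr]
    congr 1 <;> simp only [r, c] <;> ring
  have hderiv : ∀ φ ∈ Icc 0 π,
      HasDerivWithinAt (fun φ => r * cos φ + c) (-(r * sin φ)) (Icc 0 π) φ :=
    fun φ _ => by simpa using (((hasDerivAt_cos φ).const_mul r).add_const c).hasDerivWithinAt
  have hinj : InjOn (fun φ => r * cos φ + c) (Icc 0 π) :=
    fun φ hφ ψ hψ h => injOn_cos hφ hψ (by simpa [hr.ne'] using h)
  have hsqrt : ∀ φ ∈ Ioo 0 π, √((b - (r * cos φ + c)) * (r * cos φ + c - t)) = r * sin φ := by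
    intro φ hφ
    rw [← sqrt_sq (mul_pos hr (sin_pos_of_pos_of_lt_pi hφ.1 hφ.2)).le]
    congr 1
    have := sin_sq_add_cos_sq φ
    simp only [r, c]
    linear_combination (-(b - t) ^ 2 / 4) * this
  calc ∫ x in t..b, f x / √((b - x) * (x - t))
      = ∫ x in (fun φ => r * cos φ + c) '' Icc 0 π, f x / √((b - x) * (x - t)) := by
        rw [himage, integral_Icc_eq_integral_Ioc, integral_of_le htb.le]
    _ = ∫ φ in Ioo 0 π, |-(r * sin φ)| •
          (f (r * cos φ + c) / √((b - (r * cos φ + c)) * (r * cos φ + c - t))) := by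
        rw [integral_image_eq_integral_abs_deriv_smul measurableSet_Icc hderiv hinj,
          integral_Icc_eq_integral_Ioo]
    _ = ∫ φ in 0..π, f (r * cos φ + c) := by
        rw [integral_of_le pi_pos.le, integral_Ioc_eq_integral_Ioo]
        refine setIntegral_congr_fun measurableSet_Ioo fun φ hφ => ?_
        have hpos : 0 < r * sin φ := mul_pos hr (sin_pos_of_pos_of_lt_pi hφ.1 hφ.2)
        rw [hsqrt φ hφ, abs_neg, abs_of_pos hpos, smul_eq_mul, mul_div_cancel₀ _ hpos.ne']

theorem integral_cos_pow_add_two_zero_pi (n : ℕ) :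
    ∫ x in 0..π, cos x ^ (n + 2) = (n + 1) / (n + 2) * ∫ x in 0..π, cos x ^ n := by
  simp [integral_cos_pow]

theorem integral_mul_cos_add_pow (r c : ℝ) (n : ℕ) :
    ∫ φ in 0..π, (r * cos φ + c) ^ n
      = ∑ k ∈ Finset.range (n + 1),
          r ^ k * c ^ (n - k) * n.choose k * ∫ φ in 0..π, cos φ ^ k := by
  simp_rw [add_pow, mul_pow]
  rw [intervalIntegral.integral_finsetSum fun k _ => by
    apply Continuous.intervalIntegrable; fun_prop]
  refine Finset.sum_congr rfl fun k _ => ?_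
  rw [← intervalIntegral.integral_const_mul]
  congr 1; ext φ; ring

/-- Coulomb fluid integral for the sextic Freud weight (`v₀'(x) = 6x⁵`):
`(1/(2π)) ∫_t^b x·6x⁵/√((b-x)(x-t)) dx
  = 3(231b⁶ + 126b⁵t + 105b⁴t² + 100b³t³ + 105b²t⁴ + 126bt⁵ + 231t⁶)/1024`. -/
theorem coulomb_integral_sextic (t b : ℝ) (htb : t < b) :
    (1 / (2 * π)) * ∫ x in t..b, (x * (6 * x ^ 5)) / Real.sqrt ((b - x) * (x - t))
      = 3 * (231 * b ^ 6 + 126 * b ^ 5 * t + 105 * b ^ 4 * t ^ 2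
          + 100 * b ^ 3 * t ^ 3 + 105 * b ^ 2 * t ^ 4 + 126 * b * t ^ 5
          + 231 * t ^ 6) / 1024 := by
  have hpoly : ∀ x : ℝ, x * (6 * x ^ 5) = 6 * x ^ 6 := fun x => by ring
  simp_rw [hpoly, integral_div_sqrt_eq_integral_comp_cos htb (fun x => 6 * x ^ 6),
    intervalIntegral.integral_const_mul, integral_mul_cos_add_pow]
  simp [Finset.sum_range_succ, integral_cos_pow_add_two_zero_pi, Nat.choose]
  field_simp
  ring
end

section
/- Fix t ∈ ℝ. For all sufficiently large real n, the quartic equation 35b⁴ + 20b³t + 18b²t² + 20bt³ + 35t⁴ = 64n has exactly one real solution b satisfying b > t. -/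
/-!
The quartic `f(b) = 35b⁴ + 20b³t + 18b²t² + 20bt³ + 35t⁴` is strictly convex on `[t, ∞)`, since
`f''(b) = (60/7)(7b + t)² + (192/7)t²`, and `f(t) = 128t⁴`. A strictly convex function on `[a, ∞)`
that tends to `+∞` takes every value `v > f(a)` exactly once on `(a, ∞)`: once by the intermediate
value theorem, and at most once because of two such points the nearer one would lie strictly below
the chord from `(a, f a)`. Hence `N = 2t⁴ + 1` works.
-/

open Set Filter

theorem StrictConvexOn.existsUnique_eq_of_lt {f : ℝ → ℝ} {a v : ℝ}
    (hf : StrictConvexOn ℝ (Ici a) f) (hcont : ContinuousOn f (Ici a))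
    (htop : Tendsto f atTop atTop) (hv : f a < v) : ∃! b, a < b ∧ f b = v := by
  obtain ⟨c, hc⟩ := (htop.eventually_ge_atTop v).exists_forall_of_atTop
  obtain ⟨b, ⟨hab, -⟩, hb⟩ := intermediate_value_Ioc (le_sup_right : a ≤ c ⊔ a)
    (hcont.mono Icc_subset_Ici_self) ⟨hv, hc _ le_sup_left⟩
  have below : ∀ x y, a < x → x < y → f y = v → f x < v := fun x y hax hxy hy => by
    simpa [hv.le, hy] using hf.lt_on_openSegment self_mem_Ici (hax.trans hxy).le
      (hax.trans hxy).ne (Ioo_subset_openSegment ⟨hax, hxy⟩)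
  refine ⟨b, ⟨hab, hb⟩, fun x ⟨hax, hx⟩ => ?_⟩
  rcases lt_trichotomy x b with hxb | rfl | hbx
  · exact absurd hx (below x b hax hxb hb).ne
  · rfl
  · exact absurd hb (below b x hab hbx hx).ne

def endpointQuartic (t b : ℝ) : ℝ :=
  35 * b ^ 4 + 20 * b ^ 3 * t + 18 * b ^ 2 * t ^ 2 + 20 * b * t ^ 3 + 35 * t ^ 4

section endpointQuartic

variable (t : ℝ)

theorem endpointQuartic_self : endpointQuartic t t = 128 * t ^ 4 := by
  unfold endpointQuartic
  ring

theorem continuous_endpointQuartic : Continuous (endpointQuartic t) := by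
  unfold endpointQuartic
  fun_prop

theorem deriv_endpointQuartic :
    deriv (endpointQuartic t) =
      fun b => 140 * b ^ 3 + 60 * b ^ 2 * t + 36 * b * t ^ 2 + 20 * t ^ 3 := by
  funext b
  unfold endpointQuartic
  rw [deriv_fun_add, deriv_fun_add, deriv_fun_add, deriv_fun_add]
  all_goals first | fun_prop | simp
  ring

theorem iterate_deriv_two_endpointQuartic (b : ℝ) :
    deriv^[2] (endpointQuartic t) b = 420 * b ^ 2 + 120 * b * t + 36 * t ^ 2 := by
  rw [Function.iterate_succ_apply', Function.iterate_one, deriv_endpointQuartic,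
    deriv_fun_add, deriv_fun_add, deriv_fun_add]
  all_goals first | fun_prop | simp
  ring

theorem strictConvexOn_endpointQuartic : StrictConvexOn ℝ (Ici t) (endpointQuartic t) := by
  refine strictConvexOn_of_deriv2_pos (convex_Ici t) (continuous_endpointQuartic t).continuousOn
    fun b hb => ?_
  rw [interior_Ici, mem_Ioi] at hb
  rw [iterate_deriv_two_endpointQuartic]
  nlinarith [sq_nonneg (7 * b + t), sq_pos_of_pos (sub_pos.2 hb), sq_nonneg t, sq_nonneg b]

theorem tendsto_endpointQuartic_atTop : Tendsto (endpointQuartic t) atTop atTop := by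
  -- Young's inequality absorbs the odd terms: `20 |b³t| ≤ 15b⁴ + 5t⁴` and `20 |bt³| ≤ 5b⁴ + 15t⁴`.
  have lower (b : ℝ) : 15 * b ^ 4 ≤ endpointQuartic t b := by
    unfold endpointQuartic
    nlinarith [sq_nonneg (b + t), sq_nonneg (b - t), sq_nonneg (b ^ 2 - t ^ 2),
      sq_nonneg (b ^ 2 + b * t), sq_nonneg (t ^ 2 + b * t)]
  exact tendsto_atTop_mono lower
    ((tendsto_pow_atTop four_ne_zero).const_mul_atTop (by norm_num))

end endpointQuartic

/-- For fixed `t` and all sufficiently large real `n`, the quartic endpoint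
equation `35b⁴ + 20b³t + 18b²t² + 20bt³ + 35t⁴ = 64n` has exactly one real
solution `b` with `b > t`. -/
theorem quartic_endpoint_equation (t : ℝ) :
    ∃ N : ℝ, ∀ n : ℝ, N ≤ n →
      ∃! b : ℝ, t < b ∧
        35 * b ^ 4 + 20 * b ^ 3 * t + 18 * b ^ 2 * t ^ 2 + 20 * b * t ^ 3
          + 35 * t ^ 4 = 64 * n := by
  refine ⟨2 * t ^ 4 + 1, fun n hn => ?_⟩
  have hv : endpointQuartic t t < 64 * n := by
    rw [endpointQuartic_self]
    linarith
  exact (strictConvexOn_endpointQuartic t).existsUnique_eq_of_lt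
    (continuous_endpointQuartic t).continuousOn (tendsto_endpointQuartic_atTop t) hv
end

section
/- Let w(x;t) = w0(x)(A + B θ(x − t)) with A ≥ 0, A + B ≥ 0, where w0 is a smooth positive weight on ℝ with all moments finite and θ is the Heaviside step function. Let P_n(x;t) be the monic orthogonal polynomials for w(·;t) and h_n(t) = ∫ P_n(x;t)² w(x;t) dx. Then d/dt ln h_n(t) = −R_n(t), where R_n(t) := B w0(t) P_n(t;t)²/h_n(t). -/
open MeasureTheory Polynomial

private lemma aux_int_pow {w0 : ℝ → ℝ} (hw0c : Continuous w0) (hw0_pos : ∀ x, 0 < w0 x)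
    (hmom : ∀ k : ℕ, Integrable (fun x : ℝ => |x| ^ k * w0 x)) (k : ℕ) :
    Integrable (fun x : ℝ => x ^ k * w0 x) := by
  refine (hmom k).mono' ?_ ?_
  · exact ((continuous_pow k).mul hw0c).aestronglyMeasurable
  · filter_upwards with x
    rw [Real.norm_eq_abs, abs_mul, abs_pow, abs_of_nonneg (hw0_pos x).le]

private lemma aux_int_poly {w0 : ℝ → ℝ} (hw0c : Continuous w0) (hw0_pos : ∀ x, 0 < w0 x)
    (hmom : ∀ k : ℕ, Integrable (fun x : ℝ => |x| ^ k * w0 x)) (p : Polynomial ℝ) :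
    Integrable (fun x : ℝ => p.eval x * w0 x) := by
  have he : (fun x : ℝ => p.eval x * w0 x)
      = fun x => ∑ k ∈ Finset.range (p.natDegree + 1), p.coeff k * (x ^ k * w0 x) := by
    funext x
    rw [Polynomial.eval_eq_sum_range, Finset.sum_mul]
    simp [mul_assoc]
  rw [he]
  exact integrable_finset_sum _ fun k _ => (aux_int_pow hw0c hw0_pos hmom k).const_mul _

private lemma heav_int {w0 : ℝ → ℝ} {A B : ℝ} (hw0c : Continuous w0) (hw0_pos : ∀ x, 0 < w0 x)
    (hmom : ∀ k : ℕ, Integrable (fun x : ℝ => |x| ^ k * w0 x)) (p : Polynomial ℝ) (s : ℝ) :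
    Integrable (fun x : ℝ => p.eval x * (w0 x * (A + B * (if s < x then (1:ℝ) else 0)))) := by
  have h1 := aux_int_poly hw0c hw0_pos hmom p
  have hg : Measurable fun x : ℝ => A + B * (if s < x then (1:ℝ) else 0) := by
    refine measurable_const.add (measurable_const.mul ?_)
    exact Measurable.ite measurableSet_Ioi measurable_const measurable_const
  have h2 := h1.bdd_mul (c := |A| + |B|) hg.aestronglyMeasurable (Filter.Eventually.of_forall fun x => by
    rw [Real.norm_eq_abs]
    calc |A + B * (if s < x then (1:ℝ) else 0)| ≤ |A| + |B * (if s < x then (1:ℝ) else 0)| :=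
        abs_add_le _ _
      _ ≤ |A| + |B| := by
        have hb : |B * (if s < x then (1:ℝ) else 0)| ≤ |B| := by
          rw [abs_mul]; split <;> simp
        linarith)
  have he : (fun x : ℝ => p.eval x * (w0 x * (A + B * (if s < x then (1:ℝ) else 0))))
      = fun x => (A + B * (if s < x then (1:ℝ) else 0)) * (p.eval x * w0 x) := by
    funext x; ring
  rw [he]; exact h2

private lemma hasDerivAt_Ioi {f : ℝ → ℝ} (hf : Continuous f) (hi : Integrable f) (t : ℝ) :
    HasDerivAt (fun s => ∫ x in Set.Ioi s, f x) (-(f t)) t := by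
  have hsplit : ∀ a b : ℝ, a ≤ b →
      (∫ x in Set.Ioc a b, f x) + ∫ x in Set.Ioi b, f x = ∫ x in Set.Ioi a, f x := by
    intro a b hab
    rw [← setIntegral_union (Set.Ioc_disjoint_Ioi le_rfl) measurableSet_Ioi
      hi.integrableOn hi.integrableOn, Set.Ioc_union_Ioi_eq_Ioi hab]
  have key : ∀ s : ℝ, (∫ x in Set.Ioi s, f x)
      = (∫ x in Set.Ioi (0:ℝ), f x) - ∫ x in (0:ℝ)..s, f x := by
    intro s
    rcases le_total (0:ℝ) s with hs | hs
    · rw [intervalIntegral.integral_of_le hs]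
      have := hsplit 0 s hs
      linarith
    · rw [intervalIntegral.integral_symm, intervalIntegral.integral_of_le hs]
      have := hsplit s 0 hs
      linarith
  have hD : HasDerivAt (fun s => ∫ x in (0:ℝ)..s, f x) (f t) t := by
    refine intervalIntegral.integral_hasDerivAt_right hi.intervalIntegrable ?_ hf.continuousAt
    exact hf.stronglyMeasurable.stronglyMeasurableAtFilter
  have := hD.const_sub (∫ x in Set.Ioi (0:ℝ), f x)
  refine HasDerivAt.congr_of_eventuallyEq this ?_ |>.congr_deriv rfl
  filter_upwards with s using (key s)

private lemma intpoly {w0 : ℝ → ℝ} {A B : ℝ} (hw0c : Continuous w0) (hw0_pos : ∀ x, 0 < w0 x)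
    (hmom : ∀ k : ℕ, Integrable (fun x : ℝ => |x| ^ k * w0 x)) (q : Polynomial ℝ) (s : ℝ)
    (d : ℕ) (hd : q.natDegree < d) :
    (∫ x : ℝ, q.eval x * (w0 x * (A + B * (if s < x then (1:ℝ) else 0))))
      = ∑ k ∈ Finset.range d, q.coeff k *
        (A * (∫ x : ℝ, x ^ k * w0 x) + B * (∫ x in Set.Ioi s, x ^ k * w0 x)) := by
  have he : (fun x : ℝ => q.eval x * (w0 x * (A + B * (if s < x then (1:ℝ) else 0))))
      = fun x => ∑ k ∈ Finset.range d,
          q.coeff k * ((X ^ k : Polynomial ℝ).eval x * (w0 x * (A + B * (if s < x then (1:ℝ) else 0)))) := by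
    funext x
    rw [Polynomial.eval_eq_sum_range' hd, Finset.sum_mul]
    refine Finset.sum_congr rfl fun k _ => ?_
    simp [mul_assoc]
  rw [he, integral_finset_sum]
  · refine Finset.sum_congr rfl fun k _ => ?_
    rw [integral_const_mul]
    congr 1
    have he2 : (fun x : ℝ => (X ^ k : Polynomial ℝ).eval x * (w0 x * (A + B * (if s < x then (1:ℝ) else 0))))
        = fun x => A * (x ^ k * w0 x)
            + B * ((Set.Ioi s).indicator (fun x => x ^ k * w0 x) x) := by
      funext x
      simp only [Polynomial.eval_pow, Polynomial.eval_X, Set.indicator]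
      by_cases hx : s < x <;> simp [hx, Set.mem_Ioi] <;> ring
    rw [he2, integral_add, integral_const_mul, integral_const_mul,
      integral_indicator measurableSet_Ioi]
    · exact (aux_int_pow hw0c hw0_pos hmom k).const_mul A
    · exact (((aux_int_pow hw0c hw0_pos hmom k).indicator measurableSet_Ioi).const_mul B)
  · intro k _
    exact ((heav_int hw0c hw0_pos hmom (X ^ k) s)).const_mul _

private lemma orth_span {w0 : ℝ → ℝ} {A B : ℝ} {P : ℝ → ℕ → Polynomial ℝ}
    (hw0c : Continuous w0) (hw0_pos : ∀ x, 0 < w0 x)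
    (hmom : ∀ k : ℕ, Integrable (fun x : ℝ => |x| ^ k * w0 x))
    (hmonic : ∀ t n, (P t n).Monic) (hdeg : ∀ t n, (P t n).natDegree = n)
    (horth : ∀ t, ∀ j k, j ≠ k →
      ∫ x : ℝ, (P t j).eval x * (P t k).eval x
        * (w0 x * (A + B * (if t < x then (1 : ℝ) else 0))) = 0)
    (t : ℝ) (n : ℕ) :
    ∀ m, ∀ q : Polynomial ℝ, q.natDegree ≤ m → m < n →
      ∫ x : ℝ, q.eval x * (P t n).eval x
        * (w0 x * (A + B * (if t < x then (1 : ℝ) else 0))) = 0 := by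
  intro m
  induction m with
  | zero =>
    intro q hq hn
    rw [Polynomial.eq_C_of_natDegree_le_zero hq]
    have h0 : P t 0 = 1 := (hmonic t 0).natDegree_eq_zero.mp (hdeg t 0)
    have h1 := horth t 0 n (by omega)
    rw [h0] at h1
    simp only [Polynomial.eval_one, one_mul] at h1
    simp only [Polynomial.eval_C, mul_assoc]
    rw [integral_const_mul, h1, mul_zero]
  | succ m ih =>
    intro q hq hn
    set c := q.coeff (m + 1) with hc
    set r := q - Polynomial.C c * P t (m + 1) with hr
    have hPc : (P t (m + 1)).coeff (m + 1) = 1 := by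
      have := (hmonic t (m + 1)).coeff_natDegree
      rwa [hdeg t (m + 1)] at this
    have hrdeg : r.natDegree ≤ m := by
      rw [Polynomial.natDegree_le_iff_coeff_eq_zero]
      intro j hj
      rw [hr, Polynomial.coeff_sub, Polynomial.coeff_C_mul]
      rcases eq_or_lt_of_le (Nat.succ_le_of_lt hj) with hje | hje
      · rw [← hje, hPc, mul_one, ← hc, sub_self]
      · rw [Polynomial.coeff_eq_zero_of_natDegree_lt (lt_of_le_of_lt hq hje),
          Polynomial.coeff_eq_zero_of_natDegree_lt (by rw [hdeg]; exact hje),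
          mul_zero, sub_zero]
    have hq_eq : q = r + Polynomial.C c * P t (m + 1) := by rw [hr]; ring
    have i1 : Integrable (fun x : ℝ => r.eval x * (P t n).eval x
        * (w0 x * (A + B * (if t < x then (1 : ℝ) else 0)))) := by
      have := heav_int (A := A) (B := B) hw0c hw0_pos hmom (r * P t n) t
      simpa only [Polynomial.eval_mul] using this
    have i2 : Integrable (fun x : ℝ => (Polynomial.C c * P t (m + 1)).eval x * (P t n).eval x
        * (w0 x * (A + B * (if t < x then (1 : ℝ) else 0)))) := by
      have := heav_int (A := A) (B := B) hw0c hw0_pos hmom (Polynomial.C c * P t (m + 1) * P t n) t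
      simpa only [Polynomial.eval_mul] using this
    have hsum : (fun x : ℝ => q.eval x * (P t n).eval x
        * (w0 x * (A + B * (if t < x then (1 : ℝ) else 0))))
        = fun x => r.eval x * (P t n).eval x * (w0 x * (A + B * (if t < x then (1 : ℝ) else 0)))
          + (Polynomial.C c * P t (m + 1)).eval x * (P t n).eval x
            * (w0 x * (A + B * (if t < x then (1 : ℝ) else 0))) := by
      funext x
      conv_lhs => rw [hq_eq]
      rw [Polynomial.eval_add]
      ring
    rw [hsum, integral_add i1 i2, ih r hrdeg (by omega)]
    have h2 : ∫ x : ℝ, (Polynomial.C c * P t (m + 1)).eval x * (P t n).eval x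
        * (w0 x * (A + B * (if t < x then (1 : ℝ) else 0))) = 0 := by
      simp only [Polynomial.eval_mul, Polynomial.eval_C, mul_assoc]
      rw [integral_const_mul]
      have h3 := horth t (m + 1) n (by omega)
      simp only [mul_assoc] at h3
      rw [h3, mul_zero]
    rw [h2, zero_add]

/-- For the weight `w(x;t) = w0(x)(A + Bθ(x−t))` with Heaviside `θ`, the squared
norms of the monic orthogonal polynomials satisfy
`d/dt ln h_n(t) = −R_n(t)` with `R_n(t) = B w0(t) P_n(t;t)² / h_n(t)`. -/
theorem dt_log_hn_eq_neg_Rn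
    (w0 : ℝ → ℝ) (A B : ℝ) (P : ℝ → ℕ → Polynomial ℝ) (h : ℕ → ℝ → ℝ)
    (hw0_smooth : ContDiff ℝ (⊤ : ℕ∞) w0)
    (hw0_pos : ∀ x, 0 < w0 x)
    (hmom : ∀ k : ℕ, Integrable (fun x : ℝ => |x| ^ k * w0 x))
    (hA : 0 ≤ A) (hAB : 0 ≤ A + B) (hnz : ¬(A = 0 ∧ A + B = 0))
    (hmonic : ∀ t n, (P t n).Monic)
    (hdeg : ∀ t n, (P t n).natDegree = n)
    (horth : ∀ t, ∀ j k, j ≠ k →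
      ∫ x : ℝ, (P t j).eval x * (P t k).eval x
        * (w0 x * (A + B * (if t < x then (1 : ℝ) else 0))) = 0)
    (hh : ∀ n t, h n t =
      ∫ x : ℝ, ((P t n).eval x) ^ 2
        * (w0 x * (A + B * (if t < x then (1 : ℝ) else 0))))
    (hPdiff : ∀ n k, Differentiable ℝ (fun t => (P t n).coeff k)) :
    ∀ n t, deriv (fun s => Real.log (h n s)) t
      = -(B * w0 t * ((P t n).eval t) ^ 2 / h n t) := by
  intro n t
  have hw0c : Continuous w0 := hw0_smooth.continuous
  set M : ℕ → ℝ := fun k => ∫ x : ℝ, x ^ k * w0 x with hM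
  set H : ℕ → ℝ → ℝ := fun k s => ∫ x in Set.Ioi s, x ^ k * w0 x with hH
  have hdq : ∀ s : ℝ, ((P s n) ^ 2).natDegree < 2 * n + 1 := by
    intro s
    rw [(hmonic s n).natDegree_pow, hdeg]
    omega
  have hrepr : ∀ s : ℝ, h n s = ∑ k ∈ Finset.range (2 * n + 1),
      ((P s n) ^ 2).coeff k * (A * M k + B * H k s) := by
    intro s
    rw [hh n s]
    have := intpoly (A := A) (B := B) hw0c hw0_pos hmom ((P s n) ^ 2) s (2 * n + 1) (hdq s)
    rw [← this]
    simp only [Polynomial.eval_pow]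
  -- the "coefficient derivative" polynomial
  set Pd : Polynomial ℝ :=
    ∑ j ∈ Finset.range n, Polynomial.monomial j (deriv (fun s => (P s n).coeff j) t) with hPd
  have hPdcoeff : ∀ i, Pd.coeff i
      = if i < n then deriv (fun s => (P s n).coeff i) t else 0 := by
    intro i
    rw [hPd, Polynomial.finset_sum_coeff]
    simp only [Polynomial.coeff_monomial]
    rw [Finset.sum_ite_eq' (Finset.range n) i]
    simp [Finset.mem_range]
  have hPdnd : Pd.natDegree ≤ n := by
    rw [hPd]
    refine Polynomial.natDegree_sum_le_of_forall_le _ _ fun j hj => ?_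
    exact le_trans (Polynomial.natDegree_monomial_le _) (Finset.mem_range.mp hj).le
  have hPdderiv : ∀ i, HasDerivAt (fun s => (P s n).coeff i) (Pd.coeff i) t := by
    intro i
    rcases lt_trichotomy i n with hi | hi | hi
    · rw [hPdcoeff, if_pos hi]
      exact (hPdiff n i t).hasDerivAt
    · rw [hPdcoeff, if_neg (by omega)]
      subst hi
      have he : (fun s => (P s i).coeff i) = fun _ => (1 : ℝ) := by
        funext s
        have := (hmonic s i).coeff_natDegree
        rwa [hdeg] at this
      rw [he]
      exact hasDerivAt_const t 1
    · rw [hPdcoeff, if_neg (by omega)]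
      have he : (fun s => (P s n).coeff i) = fun _ => (0 : ℝ) := by
        funext s
        exact Polynomial.coeff_eq_zero_of_natDegree_lt (by rw [hdeg]; exact hi)
      rw [he]
      exact hasDerivAt_const t 0
  set Q : Polynomial ℝ := Pd * P t n + P t n * Pd with hQ
  have hsq : ∀ k, HasDerivAt (fun s => ((P s n) ^ 2).coeff k) (Q.coeff k) t := by
    intro k
    have e1 : (fun s => ((P s n) ^ 2).coeff k)
        = fun s => ∑ ij ∈ Finset.HasAntidiagonal.antidiagonal k, (P s n).coeff ij.1 * (P s n).coeff ij.2 := by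
      funext s; rw [sq, Polynomial.coeff_mul]
    have e2 : Q.coeff k
        = ∑ ij ∈ Finset.HasAntidiagonal.antidiagonal k,
            (Pd.coeff ij.1 * (P t n).coeff ij.2 + (P t n).coeff ij.1 * Pd.coeff ij.2) := by
      rw [hQ, Polynomial.coeff_add, Polynomial.coeff_mul, Polynomial.coeff_mul,
        Finset.sum_add_distrib]
    rw [e1, e2]
    exact HasDerivAt.fun_sum fun ij _ => (hPdderiv ij.1).mul (hPdderiv ij.2)
  have hHderiv : ∀ k, HasDerivAt (fun s => H k s) (-(t ^ k * w0 t)) t := fun k =>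
    hasDerivAt_Ioi ((continuous_pow k).mul hw0c) (aux_int_pow hw0c hw0_pos hmom k) t
  have base : HasDerivAt (fun s => ∑ k ∈ Finset.range (2 * n + 1),
      ((P s n) ^ 2).coeff k * (A * M k + B * H k s))
      (∑ k ∈ Finset.range (2 * n + 1),
        (Q.coeff k * (A * M k + B * H k t)
          + ((P t n) ^ 2).coeff k * (B * -(t ^ k * w0 t)))) t := by
    refine HasDerivAt.fun_sum fun k _ => ?_
    exact (hsq k).mul (((hHderiv k).const_mul B).const_add (A * M k))
  have hQnd : Q.natDegree < 2 * n + 1 := by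
    have h1 : (Pd * P t n).natDegree ≤ Pd.natDegree + (P t n).natDegree :=
      Polynomial.natDegree_mul_le
    have h2 : (P t n * Pd).natDegree ≤ (P t n).natDegree + Pd.natDegree :=
      Polynomial.natDegree_mul_le
    have h3 := Polynomial.natDegree_add_le (Pd * P t n) (P t n * Pd)
    rw [hdeg] at h1 h2
    rw [hQ]
    omega
  have hD1 : ∑ k ∈ Finset.range (2 * n + 1), Q.coeff k * (A * M k + B * H k t) = 0 := by
    rw [← intpoly (A := A) (B := B) hw0c hw0_pos hmom Q t (2 * n + 1) hQnd]
    have iPd : ∫ x : ℝ, Pd.eval x * (P t n).eval x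
        * (w0 x * (A + B * (if t < x then (1 : ℝ) else 0))) = 0 := by
      rcases Nat.eq_zero_or_pos n with hn0 | hn0
      · have hz : Pd = 0 := by rw [hPd, hn0]; simp
        simp [hz]
      · have hPdnd' : Pd.natDegree ≤ n - 1 := by
          rw [hPd]
          refine Polynomial.natDegree_sum_le_of_forall_le _ _ fun j hj => ?_
          refine le_trans (Polynomial.natDegree_monomial_le _) ?_
          have := Finset.mem_range.mp hj
          omega
        exact orth_span hw0c hw0_pos hmom hmonic hdeg horth t n (n - 1) Pd hPdnd' (by omega)
    have isplit : (fun x : ℝ => Q.eval x * (w0 x * (A + B * (if t < x then (1 : ℝ) else 0))))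
        = fun x => 2 * (Pd.eval x * (P t n).eval x
            * (w0 x * (A + B * (if t < x then (1 : ℝ) else 0)))) := by
      funext x
      rw [hQ, Polynomial.eval_add, Polynomial.eval_mul, Polynomial.eval_mul]
      ring
    rw [isplit, integral_const_mul, iPd, mul_zero]
  have hD2 : ∑ k ∈ Finset.range (2 * n + 1), ((P t n) ^ 2).coeff k * (B * -(t ^ k * w0 t))
      = -(B * w0 t * ((P t n).eval t) ^ 2) := by
    calc ∑ k ∈ Finset.range (2 * n + 1), ((P t n) ^ 2).coeff k * (B * -(t ^ k * w0 t))
        = ∑ k ∈ Finset.range (2 * n + 1),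
            (-(B * w0 t)) * (((P t n) ^ 2).coeff k * t ^ k) :=
          Finset.sum_congr rfl fun k _ => by ring
      _ = (-(B * w0 t)) * ∑ k ∈ Finset.range (2 * n + 1), ((P t n) ^ 2).coeff k * t ^ k :=
          (Finset.mul_sum _ _ _).symm
      _ = -(B * w0 t * ((P t n).eval t) ^ 2) := by
          rw [← Polynomial.eval_eq_sum_range' (hdq t), Polynomial.eval_pow]
          ring
  have hderiv : HasDerivAt (h n) (-(B * w0 t * ((P t n).eval t) ^ 2)) t := by
    rw [Finset.sum_add_distrib, hD1, hD2, zero_add] at base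
    rw [show h n = _ from funext hrepr]
    exact base
  have hcases : 0 < A ∨ 0 < A + B := by
    rcases hA.lt_or_eq with h1 | h1
    · exact Or.inl h1
    · rcases hAB.lt_or_eq with h2 | h2
      · exact Or.inr h2
      · exact absurd ⟨h1.symm, h2.symm⟩ hnz
  have hpos : 0 < h n t := by
    rw [hh n t]
    have hi : Integrable (fun x : ℝ => ((P t n).eval x) ^ 2
        * (w0 x * (A + B * (if t < x then (1 : ℝ) else 0)))) := by
      have := heav_int (A := A) (B := B) hw0c hw0_pos hmom ((P t n) ^ 2) t
      simp only [Polynomial.eval_pow] at this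
      exact this
    have hnn : ∀ x : ℝ, 0 ≤ ((P t n).eval x) ^ 2
        * (w0 x * (A + B * (if t < x then (1 : ℝ) else 0))) := by
      intro x
      have hg : 0 ≤ A + B * (if t < x then (1 : ℝ) else 0) := by
        split <;> simp <;> linarith
      exact mul_nonneg (sq_nonneg _) (mul_nonneg (hw0_pos x).le hg)
    rw [integral_pos_iff_support_of_nonneg (fun x => hnn x) hi]
    have hZ : volume {x : ℝ | (P t n).IsRoot x} = 0 :=
      Set.Finite.measure_zero (Polynomial.finite_setOf_isRoot (hmonic t n).ne_zero) _
    rcases hcases with hApos | hABpos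
    · have hsub : Set.Iic t \ {x : ℝ | (P t n).IsRoot x} ⊆ Function.support
          (fun x : ℝ => ((P t n).eval x) ^ 2
            * (w0 x * (A + B * (if t < x then (1 : ℝ) else 0)))) := by
        intro x hx
        obtain ⟨hx1, hx2⟩ := hx
        simp only [Function.mem_support]
        rw [if_neg (not_lt.mpr (Set.mem_Iic.mp hx1))]
        have h1 : (P t n).eval x ≠ 0 := hx2
        have : 0 < ((P t n).eval x) ^ 2 * (w0 x * (A + B * 0)) := by
          rw [mul_zero, add_zero]
          exact mul_pos (pow_two_pos_of_ne_zero h1) (mul_pos (hw0_pos x) hApos)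
        exact this.ne'
      calc (0 : ENNReal) < volume (Set.Iic t \ {x : ℝ | (P t n).IsRoot x}) := by
            rw [measure_diff_null hZ, Real.volume_Iic]
            exact ENNReal.zero_lt_top
        _ ≤ _ := measure_mono hsub
    · have hsub : Set.Ioi t \ {x : ℝ | (P t n).IsRoot x} ⊆ Function.support
          (fun x : ℝ => ((P t n).eval x) ^ 2
            * (w0 x * (A + B * (if t < x then (1 : ℝ) else 0)))) := by
        intro x hx
        obtain ⟨hx1, hx2⟩ := hx
        simp only [Function.mem_support]
        rw [if_pos (Set.mem_Ioi.mp hx1)]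
        have h1 : (P t n).eval x ≠ 0 := hx2
        have : 0 < ((P t n).eval x) ^ 2 * (w0 x * (A + B * 1)) := by
          rw [mul_one]
          exact mul_pos (pow_two_pos_of_ne_zero h1) (mul_pos (hw0_pos x) hABpos)
        exact this.ne'
      calc (0 : ENNReal) < volume (Set.Ioi t \ {x : ℝ | (P t n).IsRoot x}) := by
            rw [measure_diff_null hZ, Real.volume_Ioi]
            exact ENNReal.zero_lt_top
        _ ≤ _ := measure_mono hsub
  have hlog : HasDerivAt (fun s => Real.log (h n s))
      ((-(B * w0 t * ((P t n).eval t) ^ 2)) / h n t) t := hderiv.log hpos.ne'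
  rw [hlog.deriv, neg_div]
end
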